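/- There exist a real number ε > 0, a finite set Λ of unit vectors in ℝ³ all of whose coordinates are rational, an assignment to each η ∈ Λ of two vectors η₁, η₂ ∈ ℝ³ such that (η, η₁, η₂) is an orthonormal frame, and functions Γ_η : Skew³ → ℝ that are smooth on the open ball of radius ε centered at the zero matrix, such that every skew-symmetric 3×3 real matrix G with ‖G‖ < ε satisfies G = Σ_{η∈Λ} Γ_η(G)² · (η₁ ⊗ η₂ − η₂ ⊗ η₁). Moreover, for any prescribed finite set F of unit vectors in ℝ³, the set Λ can be chosen so that Λ ∩ F = ∅. -/
import Mathlib


open scoped BigOperators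

attribute [local instance] Matrix.normedAddCommGroup Matrix.normedSpace

/-- Euclidean dot product on `ℝ³` (vectors as `Fin 3 → ℝ`). -/
def dot3 (a b : Fin 3 → ℝ) : ℝ := ∑ i, a i * b i

/-- `(e₀, e₁, e₂)` is an orthonormal frame (orthonormal basis) of `ℝ³`. -/
def IsONFrame (e₀ e₁ e₂ : Fin 3 → ℝ) : Prop :=
  dot3 e₀ e₀ = 1 ∧ dot3 e₁ e₁ = 1 ∧ dot3 e₂ e₂ = 1 ∧
  dot3 e₀ e₁ = 0 ∧ dot3 e₀ e₂ = 0 ∧ dot3 e₁ e₂ = 0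

/-- All three coordinates of a vector are rational. -/
def RatCoords (a : Fin 3 → ℝ) : Prop := ∀ i, ∃ q : ℚ, a i = (q : ℝ)


namespace SkewGeomAux

noncomputable section
open Classical

def aq (t : ℚ) : ℚ := (1 - t^2) / (1 + t^2)
def bq (t : ℚ) : ℚ := 2*t / (1 + t^2)
def ar (t : ℚ) : ℝ := (aq t : ℝ)
def br (t : ℚ) : ℝ := (bq t : ℝ)

def uu (t : ℚ) : Fin 3 → ℝ := ![ar t, br t, 0]
def vv (t : ℚ) : Fin 3 → ℝ := ![ar t, 0, br t]
def ww (t : ℚ) : Fin 3 → ℝ := ![0, ar t, br t]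

lemma denom_pos (t : ℚ) : (0:ℚ) < 1 + t^2 := by positivity

lemma aq_pos {t : ℚ} (ht : 0 < t) (ht1 : t < 1) : 0 < aq t := by
  unfold aq; apply div_pos _ (denom_pos t); nlinarith

lemma bq_pos {t : ℚ} (ht : 0 < t) : 0 < bq t := by
  unfold bq; apply div_pos _ (denom_pos t); linarith

lemma ar_pos {t : ℚ} (ht : 0 < t) (ht1 : t < 1) : 0 < ar t := by
  unfold ar; exact_mod_cast aq_pos ht ht1

lemma br_pos {t : ℚ} (ht : 0 < t) : 0 < br t := by
  unfold br; exact_mod_cast bq_pos ht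

lemma sq_sum (t : ℚ) : ar t ^ 2 + br t ^ 2 = 1 := by
  unfold ar br
  have h : aq t ^ 2 + bq t ^ 2 = 1 := by
    unfold aq bq
    have h0 := (denom_pos t).ne'
    field_simp
    ring
  exact_mod_cast h

lemma aq_inj {t s : ℚ} (ht : 0 < t) (hs : 0 < s) (h : aq t = aq s) : t = s := by
  unfold aq at h
  have h1 := (denom_pos t).ne'
  have h2 := (denom_pos s).ne'
  field_simp at h
  have h3 : (t - s) * (t + s) = 0 := by nlinarith
  rcases mul_eq_zero.mp h3 with h4 | h4
  · linarith
  · linarith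

lemma exists_good (F : Finset (Fin 3 → ℝ)) :
    ∃ t : ℚ, 0 < t ∧ t < 1 ∧ uu t ∉ F ∧ -uu t ∉ F ∧ vv t ∉ F ∧ -vv t ∉ F ∧
      ww t ∉ F ∧ -ww t ∉ F := by
  classical
  set S : Set ℚ := Set.Ioo 0 1 with hS
  have hSinf : S.Infinite := Set.Ioo_infinite (by norm_num)
  have key : ∀ f : ℚ → (Fin 3 → ℝ), (∀ t ∈ S, ∀ s ∈ S, f t = f s → t = s) →
      {t | t ∈ S ∧ f t ∈ F}.Finite := by
    intro f hf
    apply Set.Finite.of_finite_image (f := f) (F.finite_toSet.subset ?_) ?_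
    · rintro x ⟨t, ⟨_, htF⟩, rfl⟩; exact htF
    · rintro t ⟨ht, _⟩ s ⟨hs, _⟩ h; exact hf t ht s hs h
  have hain : ∀ t ∈ S, ∀ s ∈ S, ar t = ar s → t = s := by
    rintro t ⟨ht, ht1⟩ s ⟨hs, hs1⟩ h
    unfold ar at h
    exact aq_inj ht hs (by exact_mod_cast h)
  have h1 := key uu (by
    rintro t ht s hs h; exact hain t ht s hs (by simpa [uu] using congrFun h 0))
  have h2 := key (fun t => -uu t) (by
    rintro t ht s hs h
    refine hain t ht s hs ?_
    have := congrFun h 0; simp [uu] at this; linarith)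
  have h3 := key vv (by
    rintro t ht s hs h; exact hain t ht s hs (by simpa [vv] using congrFun h 0))
  have h4 := key (fun t => -vv t) (by
    rintro t ht s hs h
    refine hain t ht s hs ?_
    have := congrFun h 0; simp [vv] at this; linarith)
  have h5 := key ww (by
    rintro t ht s hs h; exact hain t ht s hs (by simpa [ww] using congrFun h 1))
  have h6 := key (fun t => -ww t) (by
    rintro t ht s hs h
    refine hain t ht s hs ?_
    have := congrFun h 1; simp [ww] at this; linarith)
  have hbig : (S \ ({t | t ∈ S ∧ uu t ∈ F} ∪ {t | t ∈ S ∧ -uu t ∈ F} ∪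
      {t | t ∈ S ∧ vv t ∈ F} ∪ {t | t ∈ S ∧ -vv t ∈ F} ∪
      {t | t ∈ S ∧ ww t ∈ F} ∪ {t | t ∈ S ∧ -ww t ∈ F})).Infinite :=
    hSinf.diff (((((h1.union h2).union h3).union h4).union h5).union h6)
  obtain ⟨t, htS, htbad⟩ := hbig.nonempty
  simp only [Set.mem_union, not_or, Set.mem_setOf_eq, not_and] at htbad
  have ht0 : 0 < t := htS.1
  have ht1 : t < 1 := htS.2
  exact ⟨t, ht0, ht1, htbad.1.1.1.1.1 htS, htbad.1.1.1.1.2 htS, htbad.1.1.1.2 htS,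
    htbad.1.1.2 htS, htbad.1.2 htS, htbad.2 htS⟩


def betaf (t : ℚ) (G : Matrix (Fin 3) (Fin 3) ℝ) : ℝ :=
  ((br t / ar t) * G 1 2 + (ar t / br t) * G 0 1 - G 2 0) / (ar t + br t)
def alphaf (t : ℚ) (G : Matrix (Fin 3) (Fin 3) ℝ) : ℝ := G 1 2 / ar t - betaf t G
def gammaf (t : ℚ) (G : Matrix (Fin 3) (Fin 3) ℝ) : ℝ := G 0 1 / br t - betaf t G

def eta1 (t : ℚ) (η : Fin 3 → ℝ) : Fin 3 → ℝ :=
  if η = uu t then ![-br t, ar t, 0]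
  else if η = -uu t then ![br t, -ar t, 0]
  else if η = vv t then ![br t, 0, -ar t]
  else if η = -vv t then ![-br t, 0, ar t]
  else if η = ww t then ![0, -br t, ar t]
  else ![0, br t, -ar t]

def eta2 (t : ℚ) (η : Fin 3 → ℝ) : Fin 3 → ℝ :=
  if η = uu t ∨ η = -uu t then ![0, 0, 1]
  else if η = vv t ∨ η = -vv t then ![0, 1, 0]
  else ![1, 0, 0]

def Gam (t : ℚ) (η : Fin 3 → ℝ) (G : Matrix (Fin 3) (Fin 3) ℝ) : ℝ :=
  if η = uu t then Real.sqrt (1 + alphaf t G / 2)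
  else if η = -uu t then Real.sqrt (1 - alphaf t G / 2)
  else if η = vv t then Real.sqrt (1 + betaf t G / 2)
  else if η = -vv t then Real.sqrt (1 - betaf t G / 2)
  else if η = ww t then Real.sqrt (1 + gammaf t G / 2)
  else Real.sqrt (1 - gammaf t G / 2)

lemma vecs_ne {t : ℚ} (ht : 0 < t) (ht1 : t < 1) :
    uu t ≠ -uu t ∧ uu t ≠ vv t ∧ uu t ≠ -vv t ∧ uu t ≠ ww t ∧ uu t ≠ -ww t ∧
    (-uu t) ≠ vv t ∧ (-uu t) ≠ -vv t ∧ (-uu t) ≠ ww t ∧ (-uu t) ≠ -ww t ∧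
    vv t ≠ -vv t ∧ vv t ≠ ww t ∧ vv t ≠ -ww t ∧
    (-vv t) ≠ ww t ∧ (-vv t) ≠ -ww t ∧ ww t ≠ -ww t := by
  have ha := ar_pos ht ht1
  have hb := br_pos ht
  refine ⟨?_,?_,?_,?_,?_,?_,?_,?_,?_,?_,?_,?_,?_,?_,?_⟩ <;> intro h <;>
    first
      | (have h0 := congrFun h 0; simp [uu, vv, ww] at h0; nlinarith)
      | (have h1 := congrFun h 1; simp [uu, vv, ww] at h1; nlinarith)

end
end SkewGeomAux


set_option maxHeartbeats 2000000 in
open SkewGeomAux in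
/-- Skew-symmetric geometric lemma: decomposition of skew-symmetric `3×3` matrices
near `0` as a positive combination of `η₁⊗η₂ − η₂⊗η₁`; moreover the direction set
`Λ` can avoid any prescribed finite set `F` of unit vectors. -/
theorem skew_symmetric_geometric_lemma
    (F : Finset (Fin 3 → ℝ)) (hF : ∀ v ∈ F, dot3 v v = 1) :
    ∃ (ε : ℝ) (Λ : Finset (Fin 3 → ℝ))
      (η₁ η₂ : (Fin 3 → ℝ) → (Fin 3 → ℝ))
      (Γ : (Fin 3 → ℝ) → Matrix (Fin 3) (Fin 3) ℝ → ℝ),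
      0 < ε ∧
      (∀ η ∈ Λ, RatCoords η ∧ IsONFrame η (η₁ η) (η₂ η)) ∧
      (∀ η ∈ Λ, η ∉ F) ∧
      (∀ η ∈ Λ, ContDiffOn ℝ (⊤ : ℕ∞) (Γ η) (Metric.ball (0 : Matrix (Fin 3) (Fin 3) ℝ) ε)) ∧
      (∀ G : Matrix (Fin 3) (Fin 3) ℝ, G.transpose = -G → ‖G‖ < ε →
        G = ∑ η ∈ Λ, (Γ η G) ^ 2 •
          (Matrix.vecMulVec (η₁ η) (η₂ η) - Matrix.vecMulVec (η₂ η) (η₁ η))) := by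
  classical
  obtain ⟨t, ht0, ht1, hfu, hfnu, hfv, hfnv, hfw, hfnw⟩ := SkewGeomAux.exists_good F
  obtain ⟨d1,d2,d3,d4,d5,d6,d7,d8,d9,d10,d11,d12,d13,d14,d15⟩ := vecs_ne ht0 ht1
  have ha : 0 < ar t := ar_pos ht0 ht1
  have hb : 0 < br t := br_pos ht0
  have hab2 : ar t ^ 2 + br t ^ 2 = 1 := sq_sum t
  have hane : ar t ≠ 0 := ha.ne'
  have hbne : br t ≠ 0 := hb.ne'
  have habp : (0:ℝ) < ar t + br t := by linarith
  have habne : ar t + br t ≠ 0 := habp.ne'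
  obtain ⟨C, hC_def⟩ : ∃ z : ℝ, z = (br t / ar t + ar t / br t + 1) / (ar t + br t) := ⟨_, rfl⟩
  have hC : 0 < C := by rw [hC_def]; positivity
  obtain ⟨D, hD_def⟩ : ∃ z : ℝ, z = 1 / ar t + 1 / br t + 3 * C + 1 := ⟨_, rfl⟩
  have hD : 0 < D := by rw [hD_def]; positivity
  -- evaluation lemmas for eta1
  have e1u : eta1 t (uu t) = ![-br t, ar t, 0] := by
    unfold eta1; rw [if_pos rfl]
  have e1nu : eta1 t (-uu t) = ![br t, -ar t, 0] := by
    unfold eta1; rw [if_neg (fun h => d1 h.symm), if_pos rfl]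
  have e1v : eta1 t (vv t) = ![br t, 0, -ar t] := by
    unfold eta1; rw [if_neg (fun h => d2 h.symm), if_neg (fun h => d6 h.symm), if_pos rfl]
  have e1nv : eta1 t (-vv t) = ![-br t, 0, ar t] := by
    unfold eta1
    rw [if_neg (fun h => d3 h.symm), if_neg (fun h => d7 h.symm),
      if_neg (fun h => d10 h.symm), if_pos rfl]
  have e1w : eta1 t (ww t) = ![0, -br t, ar t] := by
    unfold eta1
    rw [if_neg (fun h => d4 h.symm), if_neg (fun h => d8 h.symm),
      if_neg (fun h => d11 h.symm), if_neg (fun h => d13 h.symm), if_pos rfl]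
  have e1nw : eta1 t (-ww t) = ![0, br t, -ar t] := by
    unfold eta1
    rw [if_neg (fun h => d5 h.symm), if_neg (fun h => d9 h.symm),
      if_neg (fun h => d12 h.symm), if_neg (fun h => d14 h.symm),
      if_neg (fun h => d15 h.symm)]
  -- evaluation lemmas for eta2
  have e2u : eta2 t (uu t) = ![0, 0, 1] := by
    unfold eta2; rw [if_pos (Or.inl rfl)]
  have e2nu : eta2 t (-uu t) = ![0, 0, 1] := by
    unfold eta2; rw [if_pos (Or.inr rfl)]
  have e2v : eta2 t (vv t) = ![0, 1, 0] := by
    unfold eta2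
    rw [if_neg (by rintro (h | h); exacts [d2 h.symm, d6 h.symm]), if_pos (Or.inl rfl)]
  have e2nv : eta2 t (-vv t) = ![0, 1, 0] := by
    unfold eta2
    rw [if_neg (by rintro (h | h); exacts [d3 h.symm, d7 h.symm]), if_pos (Or.inr rfl)]
  have e2w : eta2 t (ww t) = ![1, 0, 0] := by
    unfold eta2
    rw [if_neg (by rintro (h | h); exacts [d4 h.symm, d8 h.symm]),
      if_neg (by rintro (h | h); exacts [d11 h.symm, d13 h.symm])]
  have e2nw : eta2 t (-ww t) = ![1, 0, 0] := by
    unfold eta2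
    rw [if_neg (by rintro (h | h); exacts [d5 h.symm, d9 h.symm]),
      if_neg (by rintro (h | h); exacts [d12 h.symm, d14 h.symm])]
  -- evaluation lemmas for Gam
  have gu : ∀ G, Gam t (uu t) G = Real.sqrt (1 + alphaf t G / 2) := by
    intro G; unfold Gam; rw [if_pos rfl]
  have gnu : ∀ G, Gam t (-uu t) G = Real.sqrt (1 - alphaf t G / 2) := by
    intro G; unfold Gam; rw [if_neg (fun h => d1 h.symm), if_pos rfl]
  have gv : ∀ G, Gam t (vv t) G = Real.sqrt (1 + betaf t G / 2) := by
    intro G; unfold Gam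
    rw [if_neg (fun h => d2 h.symm), if_neg (fun h => d6 h.symm), if_pos rfl]
  have gnv : ∀ G, Gam t (-vv t) G = Real.sqrt (1 - betaf t G / 2) := by
    intro G; unfold Gam
    rw [if_neg (fun h => d3 h.symm), if_neg (fun h => d7 h.symm),
      if_neg (fun h => d10 h.symm), if_pos rfl]
  have gw : ∀ G, Gam t (ww t) G = Real.sqrt (1 + gammaf t G / 2) := by
    intro G; unfold Gam
    rw [if_neg (fun h => d4 h.symm), if_neg (fun h => d8 h.symm),
      if_neg (fun h => d11 h.symm), if_neg (fun h => d13 h.symm), if_pos rfl]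
  have gnw : ∀ G, Gam t (-ww t) G = Real.sqrt (1 - gammaf t G / 2) := by
    intro G; unfold Gam
    rw [if_neg (fun h => d5 h.symm), if_neg (fun h => d9 h.symm),
      if_neg (fun h => d12 h.symm), if_neg (fun h => d14 h.symm),
      if_neg (fun h => d15 h.symm)]
  -- bounds on the coefficients on the ball
  have hent : ∀ i j : Fin 3, ∀ G : Matrix (Fin 3) (Fin 3) ℝ, |G i j| ≤ ‖G‖ := by
    intro i j G
    have := Matrix.norm_entry_le_entrywise_sup_norm G (i := i) (j := j)
    simpa using this
  have hball : ∀ G : Matrix (Fin 3) (Fin 3) ℝ, G ∈ Metric.ball (0 : Matrix (Fin 3) (Fin 3) ℝ) (1/D) →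
      |alphaf t G| < 1 ∧ |betaf t G| < 1 ∧ |gammaf t G| < 1 := by
    intro G hG
    rw [Metric.mem_ball, dist_zero_right] at hG
    have hGn : 0 ≤ ‖G‖ := norm_nonneg G
    have h12 := hent 1 2 G
    have h01 := hent 0 1 G
    have h20 := hent 2 0 G
    have hba : 0 < br t / ar t := by positivity
    have hab : 0 < ar t / br t := by positivity
    have e1 : |br t / ar t * G 1 2| ≤ br t / ar t * ‖G‖ := by
      rw [abs_mul, abs_of_pos hba]
      exact mul_le_mul_of_nonneg_left h12 hba.le
    have e2 : |ar t / br t * G 0 1| ≤ ar t / br t * ‖G‖ := by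
      rw [abs_mul, abs_of_pos hab]
      exact mul_le_mul_of_nonneg_left h01 hab.le
    have key : |br t / ar t * G 1 2 + ar t / br t * G 0 1 - G 2 0| ≤
        (br t / ar t + ar t / br t + 1) * ‖G‖ := by
      calc |br t / ar t * G 1 2 + ar t / br t * G 0 1 - G 2 0|
          ≤ |br t / ar t * G 1 2 + ar t / br t * G 0 1| + |G 2 0| := abs_sub _ _
        _ ≤ |br t / ar t * G 1 2| + |ar t / br t * G 0 1| + |G 2 0| := by
            linarith [abs_add_le (br t / ar t * G 1 2) (ar t / br t * G 0 1)]
        _ ≤ (br t / ar t + ar t / br t + 1) * ‖G‖ := by nlinarith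
    have hβb : |betaf t G| ≤ C * ‖G‖ := by
      unfold betaf
      rw [abs_div, abs_of_pos habp]
      calc |br t / ar t * G 1 2 + ar t / br t * G 0 1 - G 2 0| / (ar t + br t)
          ≤ ((br t / ar t + ar t / br t + 1) * ‖G‖) / (ar t + br t) := by gcongr
        _ = C * ‖G‖ := by rw [hC_def]; ring
    have hDG : D * ‖G‖ < 1 := by
      have h1 : D * ‖G‖ < D * (1/D) := by gcongr
      have h2 : D * (1/D) = 1 := by field_simp
      linarith
    have hαb : |alphaf t G| ≤ (1 / ar t + C) * ‖G‖ := by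
      unfold alphaf
      have h1 : |G 1 2 / ar t| ≤ ‖G‖ / ar t := by
        rw [abs_div, abs_of_pos ha]; gcongr
      calc |G 1 2 / ar t - betaf t G| ≤ |G 1 2 / ar t| + |betaf t G| := abs_sub _ _
        _ ≤ ‖G‖ / ar t + C * ‖G‖ := by linarith
        _ = (1 / ar t + C) * ‖G‖ := by ring
    have hγb : |gammaf t G| ≤ (1 / br t + C) * ‖G‖ := by
      unfold gammaf
      have h1 : |G 0 1 / br t| ≤ ‖G‖ / br t := by
        rw [abs_div, abs_of_pos hb]; gcongr
      calc |G 0 1 / br t - betaf t G| ≤ |G 0 1 / br t| + |betaf t G| := abs_sub _ _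
        _ ≤ ‖G‖ / br t + C * ‖G‖ := by linarith
        _ = (1 / br t + C) * ‖G‖ := by ring
    have hCa : 0 < 1 / ar t := by positivity
    have hCb : 0 < 1 / br t := by positivity
    have hαD : (1 / ar t + C) ≤ D := by rw [hD_def]; linarith
    have hβD : C ≤ D := by rw [hD_def]; linarith
    have hγD : (1 / br t + C) ≤ D := by rw [hD_def]; linarith
    refine ⟨?_, ?_, ?_⟩
    · have := mul_le_mul_of_nonneg_right hαD hGn; linarith
    · have := mul_le_mul_of_nonneg_right hβD hGn; linarith
    · have := mul_le_mul_of_nonneg_right hγD hGn; linarith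
  have hentC : ∀ i j : Fin 3, ContDiff ℝ (⊤ : ℕ∞) (fun G : Matrix (Fin 3) (Fin 3) ℝ => G i j) := by
    intro i j
    have h1 : ContDiff ℝ (⊤ : ℕ∞) (fun G : Matrix (Fin 3) (Fin 3) ℝ => G i) :=
      (ContinuousLinearMap.proj (R := ℝ) (φ := fun _ : Fin 3 => Fin 3 → ℝ) i).contDiff
    have h2 : ContDiff ℝ (⊤ : ℕ∞) (fun g : Fin 3 → ℝ => g j) :=
      (ContinuousLinearMap.proj (R := ℝ) (φ := fun _ : Fin 3 => ℝ) j).contDiff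
    exact h2.comp h1
  have hβC : ContDiff ℝ (⊤ : ℕ∞) (betaf t) := by
    unfold betaf
    exact (((contDiff_const.mul (hentC 1 2)).add (contDiff_const.mul (hentC 0 1))).sub
      (hentC 2 0)).div_const _
  have hαC : ContDiff ℝ (⊤ : ℕ∞) (alphaf t) := by
    unfold alphaf
    exact ((hentC 1 2).div_const _).sub hβC
  have hγC : ContDiff ℝ (⊤ : ℕ∞) (gammaf t) := by
    unfold gammaf
    exact ((hentC 0 1).div_const _).sub hβC
  refine ⟨1/D, {uu t, -uu t, vv t, -vv t, ww t, -ww t}, eta1 t, eta2 t, Gam t,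
    by positivity, ?_, ?_, ?_, ?_⟩
  · -- RatCoords and frames
    intro η hη
    simp only [Finset.mem_insert, Finset.mem_singleton] at hη
    rcases hη with rfl | rfl | rfl | rfl | rfl | rfl
    · constructor
      · intro i; fin_cases i
        exacts [⟨aq t, by simp [uu, ar]⟩, ⟨bq t, by simp [uu, br]⟩, ⟨0, by simp [uu]⟩]
      · rw [IsONFrame, e1u, e2u]
        refine ⟨?_, ?_, ?_, ?_, ?_, ?_⟩ <;> simp [dot3, Fin.sum_univ_three, uu] <;>
          nlinarith [hab2]
    · constructor
      · intro i; fin_cases i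
        exacts [⟨-aq t, by simp [uu, ar]⟩, ⟨-bq t, by simp [uu, br]⟩, ⟨0, by simp [uu]⟩]
      · rw [IsONFrame, e1nu, e2nu]
        refine ⟨?_, ?_, ?_, ?_, ?_, ?_⟩ <;> simp [dot3, Fin.sum_univ_three, uu] <;>
          nlinarith [hab2]
    · constructor
      · intro i; fin_cases i
        exacts [⟨aq t, by simp [vv, ar]⟩, ⟨0, by simp [vv]⟩, ⟨bq t, by simp [vv, br]⟩]
      · rw [IsONFrame, e1v, e2v]
        refine ⟨?_, ?_, ?_, ?_, ?_, ?_⟩ <;> simp [dot3, Fin.sum_univ_three, vv] <;>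
          nlinarith [hab2]
    · constructor
      · intro i; fin_cases i
        exacts [⟨-aq t, by simp [vv, ar]⟩, ⟨0, by simp [vv]⟩, ⟨-bq t, by simp [vv, br]⟩]
      · rw [IsONFrame, e1nv, e2nv]
        refine ⟨?_, ?_, ?_, ?_, ?_, ?_⟩ <;> simp [dot3, Fin.sum_univ_three, vv] <;>
          nlinarith [hab2]
    · constructor
      · intro i; fin_cases i
        exacts [⟨0, by simp [ww]⟩, ⟨aq t, by simp [ww, ar]⟩, ⟨bq t, by simp [ww, br]⟩]
      · rw [IsONFrame, e1w, e2w]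
        refine ⟨?_, ?_, ?_, ?_, ?_, ?_⟩ <;> simp [dot3, Fin.sum_univ_three, ww] <;>
          nlinarith [hab2]
    · constructor
      · intro i; fin_cases i
        exacts [⟨0, by simp [ww]⟩, ⟨-aq t, by simp [ww, ar]⟩, ⟨-bq t, by simp [ww, br]⟩]
      · rw [IsONFrame, e1nw, e2nw]
        refine ⟨?_, ?_, ?_, ?_, ?_, ?_⟩ <;> simp [dot3, Fin.sum_univ_three, ww] <;>
          nlinarith [hab2]
  · -- avoids F
    intro η hη
    simp only [Finset.mem_insert, Finset.mem_singleton] at hη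
    rcases hη with rfl | rfl | rfl | rfl | rfl | rfl
    exacts [hfu, hfnu, hfv, hfnv, hfw, hfnw]
  · -- smoothness
    intro η hη
    simp only [Finset.mem_insert, Finset.mem_singleton] at hη
    rcases hη with rfl | rfl | rfl | rfl | rfl | rfl
    · have : Gam t (uu t) = fun G => Real.sqrt (1 + alphaf t G / 2) := funext gu
      rw [this]
      exact ContDiffOn.sqrt ((contDiff_const.add (hαC.div_const 2)).contDiffOn)
        (fun x hx => by
          have h := (abs_lt.mp (hball x hx).1).1
          have : (0:ℝ) < 1 + alphaf t x / 2 := by linarith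
          exact this.ne')
    · have : Gam t (-uu t) = fun G => Real.sqrt (1 - alphaf t G / 2) := funext gnu
      rw [this]
      exact ContDiffOn.sqrt ((contDiff_const.sub (hαC.div_const 2)).contDiffOn)
        (fun x hx => by
          have h := (abs_lt.mp (hball x hx).1).2
          have : (0:ℝ) < 1 - alphaf t x / 2 := by linarith
          exact this.ne')
    · have : Gam t (vv t) = fun G => Real.sqrt (1 + betaf t G / 2) := funext gv
      rw [this]
      exact ContDiffOn.sqrt ((contDiff_const.add (hβC.div_const 2)).contDiffOn)
        (fun x hx => by
          have h := (abs_lt.mp (hball x hx).2.1).1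
          have : (0:ℝ) < 1 + betaf t x / 2 := by linarith
          exact this.ne')
    · have : Gam t (-vv t) = fun G => Real.sqrt (1 - betaf t G / 2) := funext gnv
      rw [this]
      exact ContDiffOn.sqrt ((contDiff_const.sub (hβC.div_const 2)).contDiffOn)
        (fun x hx => by
          have h := (abs_lt.mp (hball x hx).2.1).2
          have : (0:ℝ) < 1 - betaf t x / 2 := by linarith
          exact this.ne')
    · have : Gam t (ww t) = fun G => Real.sqrt (1 + gammaf t G / 2) := funext gw
      rw [this]
      exact ContDiffOn.sqrt ((contDiff_const.add (hγC.div_const 2)).contDiffOn)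
        (fun x hx => by
          have h := (abs_lt.mp (hball x hx).2.2).1
          have : (0:ℝ) < 1 + gammaf t x / 2 := by linarith
          exact this.ne')
    · have : Gam t (-ww t) = fun G => Real.sqrt (1 - gammaf t G / 2) := funext gnw
      rw [this]
      exact ContDiffOn.sqrt ((contDiff_const.sub (hγC.div_const 2)).contDiffOn)
        (fun x hx => by
          have h := (abs_lt.mp (hball x hx).2.2).2
          have : (0:ℝ) < 1 - gammaf t x / 2 := by linarith
          exact this.ne')
  · -- the identity
    intro G hGt hGe
    have hGb : G ∈ Metric.ball (0 : Matrix (Fin 3) (Fin 3) ℝ) (1/D) := by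
      rwa [Metric.mem_ball, dist_zero_right]
    obtain ⟨hα1, hβ1, hγ1⟩ := hball G hGb
    have hα' := abs_lt.mp hα1
    have hβ' := abs_lt.mp hβ1
    have hγ' := abs_lt.mp hγ1
    have hskew : ∀ i j, G j i = -(G i j) := by
      intro i j
      have := congrFun (congrFun hGt i) j
      simpa [Matrix.transpose_apply, Matrix.neg_apply] using this
    have h00 : G 0 0 = 0 := by have := hskew 0 0; linarith
    have h11 : G 1 1 = 0 := by have := hskew 1 1; linarith
    have h22 : G 2 2 = 0 := by have := hskew 2 2; linarith
    have h10 : G 1 0 = -(G 0 1) := hskew 0 1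
    have h02 : G 0 2 = -(G 2 0) := hskew 2 0
    have h21 : G 2 1 = -(G 1 2) := hskew 1 2
    rw [Finset.sum_insert (by simp [d1, d2, d3, d4, d5]),
      Finset.sum_insert (by simp [d6, d7, d8, d9]),
      Finset.sum_insert (by simp [d10, d11, d12]),
      Finset.sum_insert (by simp [d13, d14]),
      Finset.sum_insert (by simp [d15]),
      Finset.sum_singleton]
    simp only [gu, gnu, gv, gnv, gw, gnw, e1u, e1nu, e1v, e1nv, e1w, e1nw,
      e2u, e2nu, e2v, e2nv, e2w, e2nw]
    rw [Real.sq_sqrt (by linarith : (0:ℝ) ≤ 1 + alphaf t G / 2),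
      Real.sq_sqrt (by linarith : (0:ℝ) ≤ 1 - alphaf t G / 2),
      Real.sq_sqrt (by linarith : (0:ℝ) ≤ 1 + betaf t G / 2),
      Real.sq_sqrt (by linarith : (0:ℝ) ≤ 1 - betaf t G / 2),
      Real.sq_sqrt (by linarith : (0:ℝ) ≤ 1 + gammaf t G / 2),
      Real.sq_sqrt (by linarith : (0:ℝ) ≤ 1 - gammaf t G / 2)]
    ext i j
    fin_cases i <;> fin_cases j <;>
      simp [Matrix.add_apply, Matrix.smul_apply, Matrix.sub_apply,
        Matrix.vecMulVec_apply, smul_eq_mul, alphaf, betaf, gammaf,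
        h00, h11, h22, h10, h02, h21] <;>
      field_simp <;>
      ring
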